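/- The full time-splitting spectral scheme conserves the discrete mass of the wave function at every step: ‖ψ^{h,n}‖_{ℓ²} = ‖ψ^{h,0}‖_{ℓ²} for all n ≥ 1, where ‖ψ‖²_{ℓ²} = ((b-a)/M)∑_{j=0}^{M-1}|ψ_j|², and one step consists of (i) exact Fourier-multiplier evolution ψ*_j = (1/M)∑_ℓ e^{-ih Δt ω_ℓ²/2} ψ̂^n_ℓ e^{iω_ℓ(x_j-a)} followed by (ii) multiplication by a unimodular phase ψ^{n+1}_j = e^{-iΥ_j Δt/h} ψ*_j with Υ_j real. -/

import Mathlib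

/-!
With `ζ = exp (2πi/M)` the Fourier modes are `exp (i ω_ℓ (x_j - a)) = ζ ^ (ℓ j)`, and the mode
window `-M/2 ≤ ℓ < M/2` is a complete residue system mod `M`. Orthogonality of the characters
`j ↦ ζ ^ (ℓ j)` then makes both the discrete Fourier transform and its inverse `√M` times an
isometry (Parseval). Step (i) only multiplies the Fourier coefficients by unimodular factors and
step (ii) multiplies pointwise by unimodular phases, so `∑ |ψ_j|²` is preserved by every step.
-/

open Complex Real Finset ComplexConjugate

theorem sum_norm_sq_sum_mul_eq_of_orthogonal {ι κ : Type*} [DecidableEq κ] (s : Finset ι)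
    (t : Finset κ) (U : ι → κ → ℂ) (C : ℝ)
    (hU : ∀ k ∈ t, ∀ k' ∈ t, ∑ i ∈ s, U i k * conj (U i k') = if k = k' then (C : ℂ) else 0)
    (g : κ → ℂ) :
    ∑ i ∈ s, ‖∑ k ∈ t, g k * U i k‖ ^ 2 = C * ∑ k ∈ t, ‖g k‖ ^ 2 := by
  apply Complex.ofReal_injective
  push_cast
  simp_rw [← mul_conj', map_sum, map_mul, sum_mul_sum, sum_comm (s := s), mul_sum]
  refine sum_congr rfl fun k hk => ?_
  calc ∑ k' ∈ t, ∑ i ∈ s, g k * U i k * (conj (g k') * conj (U i k'))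
      = ∑ k' ∈ t, g k * conj (g k') * ∑ i ∈ s, U i k * conj (U i k') := by
        simp_rw [mul_sum]; refine sum_congr rfl fun _ _ => sum_congr rfl fun _ _ => by ring
    _ = C * (g k * conj (g k)) := by
        rw [sum_congr rfl fun k' hk' => by rw [hU k hk k' hk'], sum_eq_single_of_mem k hk]
        · simp [mul_comm]
        · intro k' _ hne; simp [Ne.symm hne]

namespace IsPrimitiveRoot

variable {K : Type*} [Field K] {ζ : K} {M : ℕ}

theorem sum_range_zpow_pow (hζ : IsPrimitiveRoot ζ M) (k : ℤ) :
    ∑ t ∈ range M, (ζ ^ k) ^ t = if (M : ℤ) ∣ k then (M : K) else 0 := by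
  split_ifs with hk
  · simp [(hζ.zpow_eq_one_iff_dvd k).mpr hk]
  · have hpow : (ζ ^ k) ^ M = 1 := by
      rw [← zpow_natCast, ← zpow_mul, mul_comm, zpow_mul, zpow_natCast, hζ.pow_eq_one, one_zpow]
    rw [geom_sum_eq (mt (hζ.zpow_eq_one_iff_dvd k).mp hk), hpow, sub_self, zero_div]

theorem sum_Ico_zpow_mul (hζ : IsPrimitiveRoot ζ M) (c k : ℤ) :
    ∑ ℓ ∈ Ico c (c + M), ζ ^ (k * ℓ) = if (M : ℤ) ∣ k then (M : K) else 0 := by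
  obtain rfl | hM := eq_or_ne M 0
  · simp
  have hζ0 : ζ ≠ 0 := hζ.ne_zero hM
  have hshift : ∀ t : ℕ, ζ ^ (k * (c + t)) = ζ ^ (k * c) * (ζ ^ k) ^ t := by
    intro t; rw [mul_add, zpow_add₀ hζ0, zpow_mul ζ k t, zpow_natCast]
  rw [Int.Ico_eq_finset_map, sum_map]
  simp only [add_sub_cancel_left, Int.toNat_natCast, Function.Embedding.trans_apply,
    Nat.castEmbedding_apply, addLeftEmbedding_apply, hshift, ← mul_sum, hζ.sum_range_zpow_pow]
  split_ifs with hk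
  · rw [zpow_mul, (hζ.zpow_eq_one_iff_dvd k).mpr hk, one_zpow, one_mul]
  · rw [mul_zero]

theorem sum_fin_zpow_mul (hζ : IsPrimitiveRoot ζ M) (k : ℤ) :
    ∑ j : Fin M, ζ ^ (k * j) = if (M : ℤ) ∣ k then (M : K) else 0 := by
  simp_rw [zpow_mul, zpow_natCast]
  rw [Fin.sum_univ_eq_sum_range (fun j => (ζ ^ k) ^ j), hζ.sum_range_zpow_pow]

end IsPrimitiveRoot

theorem Int.dvd_sub_iff_eq_of_mem_Ico {M c ℓ ℓ' : ℤ} (hℓ : ℓ ∈ Ico c (c + M))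
    (hℓ' : ℓ' ∈ Ico c (c + M)) : M ∣ ℓ - ℓ' ↔ ℓ = ℓ' := by
  refine ⟨fun h => ?_, by rintro rfl; simp⟩
  rw [mem_Ico] at hℓ hℓ'
  have := Int.eq_zero_of_abs_lt_dvd h (by rw [abs_lt]; omega)
  omega

theorem Fin.natCast_dvd_sub_iff {M : ℕ} (j j' : Fin M) : (M : ℤ) ∣ (j : ℤ) - j' ↔ j = j' := by
  rw [Int.dvd_sub_iff_eq_of_mem_Ico (c := 0) (by simp) (by simp), Nat.cast_inj, Fin.val_inj]

namespace IsPrimitiveRoot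

variable {ζ : ℂ} {M : ℕ}

theorem conj_zpow (hζ : IsPrimitiveRoot ζ M) (hM : M ≠ 0) (n : ℤ) : conj (ζ ^ n) = ζ ^ (-n) := by
  rw [map_zpow₀, ← inv_eq_conj (hζ.norm'_eq_one hM), inv_zpow, zpow_neg]

theorem sum_fin_zpow_mul_conj (hζ : IsPrimitiveRoot ζ M) (hM : M ≠ 0) {c ℓ ℓ' : ℤ}
    (hℓ : ℓ ∈ Ico c (c + M)) (hℓ' : ℓ' ∈ Ico c (c + M)) :
    ∑ j : Fin M, ζ ^ (ℓ * j) * conj (ζ ^ (ℓ' * j)) = if ℓ = ℓ' then (M : ℂ) else 0 := by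
  have hterm : ∀ j : Fin M, ζ ^ (ℓ * j) * conj (ζ ^ (ℓ' * j)) = ζ ^ ((ℓ - ℓ') * j) := by
    intro j
    rw [hζ.conj_zpow hM, ← zpow_add₀ (hζ.ne_zero hM)]
    ring_nf
  simp_rw [hterm, hζ.sum_fin_zpow_mul, Int.dvd_sub_iff_eq_of_mem_Ico hℓ hℓ']

theorem sum_Ico_conj_zpow_mul (hζ : IsPrimitiveRoot ζ M) (hM : M ≠ 0) (c : ℤ) (j j' : Fin M) :
    ∑ ℓ ∈ Ico c (c + M), conj (ζ ^ (ℓ * j)) * conj (conj (ζ ^ (ℓ * j'))) =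
      if j = j' then (M : ℂ) else 0 := by
  have hterm : ∀ ℓ : ℤ, conj (ζ ^ (ℓ * j)) * conj (conj (ζ ^ (ℓ * j'))) = ζ ^ ((j' - j) * ℓ) := by
    intro ℓ
    rw [conj_conj, hζ.conj_zpow hM, ← zpow_add₀ (hζ.ne_zero hM)]
    ring_nf
  simp_rw [hterm, hζ.sum_Ico_zpow_mul, dvd_sub_comm, Fin.natCast_dvd_sub_iff]

theorem sum_norm_sq_sum_mul_zpow (hζ : IsPrimitiveRoot ζ M) (hM : M ≠ 0) (c : ℤ) (g : ℤ → ℂ) :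
    ∑ j : Fin M, ‖∑ ℓ ∈ Ico c (c + M), g ℓ * ζ ^ (ℓ * j)‖ ^ 2 =
      M * ∑ ℓ ∈ Ico c (c + M), ‖g ℓ‖ ^ 2 := by
  refine sum_norm_sq_sum_mul_eq_of_orthogonal univ (Ico c (c + M))
    (fun (j : Fin M) ℓ => ζ ^ (ℓ * j)) M (fun _ hℓ _ hℓ' => ?_) g
  rw [ofReal_natCast]
  exact hζ.sum_fin_zpow_mul_conj hM hℓ hℓ'

theorem sum_norm_sq_sum_mul_conj_zpow (hζ : IsPrimitiveRoot ζ M) (hM : M ≠ 0) (c : ℤ)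
    (f : Fin M → ℂ) :
    ∑ ℓ ∈ Ico c (c + M), ‖∑ j : Fin M, f j * conj (ζ ^ (ℓ * j))‖ ^ 2 =
      M * ∑ j : Fin M, ‖f j‖ ^ 2 := by
  refine sum_norm_sq_sum_mul_eq_of_orthogonal (Ico c (c + M)) univ
    (fun ℓ (j : Fin M) => conj (ζ ^ (ℓ * j))) M (fun j _ j' _ => ?_) f
  rw [ofReal_natCast]
  exact hζ.sum_Ico_conj_zpow_mul hM c j j'

theorem sum_norm_sq_fourier_multiplier (hζ : IsPrimitiveRoot ζ M) (hM : M ≠ 0) (c : ℤ)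
    {m : ℤ → ℂ} (hm : ∀ ℓ ∈ Ico c (c + M), ‖m ℓ‖ = 1) (f : Fin M → ℂ) :
    ∑ j : Fin M, ‖1 / (M : ℂ) * ∑ ℓ ∈ Ico c (c + M),
        m ℓ * (∑ j' : Fin M, f j' * conj (ζ ^ (ℓ * j'))) * ζ ^ (ℓ * j)‖ ^ 2 =
      ∑ j : Fin M, ‖f j‖ ^ 2 := by
  calc _ = (1 / M) ^ 2 * (M * ∑ ℓ ∈ Ico c (c + M),
          ‖m ℓ * ∑ j' : Fin M, f j' * conj (ζ ^ (ℓ * j'))‖ ^ 2) := by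
        simp only [norm_mul, mul_pow, ← mul_sum, norm_div, norm_one, Complex.norm_natCast,
          hζ.sum_norm_sq_sum_mul_zpow hM]
    _ = (1 / M) ^ 2 * (M * ∑ ℓ ∈ Ico c (c + M),
          ‖∑ j' : Fin M, f j' * conj (ζ ^ (ℓ * j'))‖ ^ 2) := by
        congr 2
        exact sum_congr rfl fun ℓ hℓ => by rw [norm_mul, hm ℓ hℓ, one_mul]
    _ = ∑ j : Fin M, ‖f j‖ ^ 2 := by
        rw [hζ.sum_norm_sq_sum_mul_conj_zpow hM]
        field_simp

end IsPrimitiveRoot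

theorem exp_I_mul_fourier_mode {a b : ℝ} (hab : a ≠ b) (M : ℕ) (ℓ : ℤ) (j : ℕ) :
    cexp (I * ↑(2 * π * ℓ / (b - a)) * (↑(a + j * (b - a) / M) - ↑a)) =
      cexp (2 * π * I / M) ^ (ℓ * j) := by
  have hba : (b - a : ℂ) ≠ 0 := sub_ne_zero.mpr (by exact_mod_cast hab.symm)
  rw [← exp_int_mul]
  congr 1
  push_cast
  field_simp
  ring

theorem time_splitting_spectral_scheme_conserves_mass_general
    (M : ℕ) (hM : 0 < M) (hMeven : Even M)
    (a b h Δt : ℝ) (hab : a < b)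
    (x : ℕ → ℝ) (hx : ∀ j : ℕ, x j = a + j * (b - a) / M)
    (ω : ℤ → ℝ) (hω : ∀ ℓ : ℤ, ω ℓ = 2 * Real.pi * ℓ / (b - a))
    (ψ ψstar : ℕ → Fin M → ℂ) (ψhat : ℕ → ℤ → ℂ) (Υ : ℕ → Fin M → ℝ)
    (hψhat : ∀ n (ℓ : ℤ), ψhat n ℓ =
      ∑ j : Fin M, ψ n j * Complex.exp (-Complex.I * (ω ℓ) * (x j - a)))
    (hstep1 : ∀ n (j : Fin M), ψstar n j =
      (1 / (M : ℂ)) * ∑ ℓ ∈ Finset.Icc (-(M : ℤ) / 2) ((M : ℤ) / 2 - 1),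
        Complex.exp (-Complex.I * h * Δt * (ω ℓ) ^ 2 / 2) * ψhat n ℓ *
          Complex.exp (Complex.I * (ω ℓ) * (x j - a)))
    (hstep2 : ∀ n (j : Fin M), ψ (n + 1) j =
      Complex.exp (-Complex.I * (Υ n j) * Δt / h) * ψstar n j) :
    ∀ n : ℕ, 1 ≤ n →
      Real.sqrt (((b - a) / M) * ∑ j : Fin M, ‖ψ n j‖ ^ 2) =
      Real.sqrt (((b - a) / M) * ∑ j : Fin M, ‖ψ 0 j‖ ^ 2) := by
  have hM0 : M ≠ 0 := hM.ne'
  have hζ : IsPrimitiveRoot (cexp (2 * π * I / M)) M := isPrimitiveRoot_exp M hM0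
  -- `-(M : ℤ) / 2` parses as `(-M) / 2`; it is `-(M / 2)` because `M` is even.
  have hW :
      Icc (-(M : ℤ) / 2) ((M : ℤ) / 2 - 1) = Ico (-((M : ℤ) / 2)) (-((M : ℤ) / 2) + M) := by
    obtain ⟨m, rfl⟩ := hMeven
    ext ℓ
    simp only [mem_Icc, mem_Ico]
    omega
  have hmode : ∀ (ℓ : ℤ) (j : Fin M),
      cexp (I * ω ℓ * (x j - a)) = cexp (2 * π * I / M) ^ (ℓ * j) := fun ℓ j => by
    rw [hω, hx]
    exact exp_I_mul_fourier_mode hab.ne M ℓ j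
  have hmode_neg : ∀ (ℓ : ℤ) (j : Fin M),
      cexp (-I * ω ℓ * (x j - a)) = conj (cexp (2 * π * I / M) ^ (ℓ * j)) := fun ℓ j => by
    rw [← hmode, ← exp_conj]
    simp [conj_ofReal]
  have hdispersion : ∀ ℓ, ‖cexp (-I * h * Δt * (ω ℓ) ^ 2 / 2)‖ = 1 := fun ℓ => by
    simp [norm_exp, ← ofReal_pow]
  have hmass_succ : ∀ n, ∑ j, ‖ψ (n + 1) j‖ ^ 2 = ∑ j, ‖ψ n j‖ ^ 2 := fun n => by
    simp only [hstep2, norm_mul, norm_exp, hstep1, hψhat, hW, hmode, hmode_neg]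
    simpa using hζ.sum_norm_sq_fourier_multiplier hM0 _ (fun ℓ _ => hdispersion ℓ) (ψ n)
  have hmass : ∀ n, ∑ j, ‖ψ n j‖ ^ 2 = ∑ j, ‖ψ 0 j‖ ^ 2 := by
    intro n
    induction n with
    | zero => rfl
    | succ n ih => rw [hmass_succ, ih]
  intro n _
  rw [hmass n]

theorem time_splitting_spectral_scheme_conserves_mass
    (M : ℕ) (hM : 0 < M) (hMeven : Even M)
    (a b h Δt : ℝ) (hab : a < b) (hh : 0 < h) (hΔt : 0 < Δt)
    (x : ℕ → ℝ) (hx : ∀ j : ℕ, x j = a + j * (b - a) / M)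
    (ω : ℤ → ℝ) (hω : ∀ ℓ : ℤ, ω ℓ = 2 * Real.pi * ℓ / (b - a))
    (ψ ψstar : ℕ → Fin M → ℂ) (ψhat : ℕ → ℤ → ℂ) (Υ : ℕ → Fin M → ℝ)
    (hψhat : ∀ n (ℓ : ℤ), ψhat n ℓ =
      ∑ j : Fin M, ψ n j * Complex.exp (-Complex.I * (ω ℓ) * (x j - a)))
    (hstep1 : ∀ n (j : Fin M), ψstar n j =
      (1 / (M : ℂ)) * ∑ ℓ ∈ Finset.Icc (-(M : ℤ) / 2) ((M : ℤ) / 2 - 1),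
        Complex.exp (-Complex.I * h * Δt * (ω ℓ) ^ 2 / 2) * ψhat n ℓ *
          Complex.exp (Complex.I * (ω ℓ) * (x j - a)))
    (hstep2 : ∀ n (j : Fin M), ψ (n + 1) j =
      Complex.exp (-Complex.I * (Υ n j) * Δt / h) * ψstar n j) :
    ∀ n : ℕ, 1 ≤ n →
      Real.sqrt (((b - a) / M) * ∑ j : Fin M, ‖ψ n j‖ ^ 2) =
      Real.sqrt (((b - a) / M) * ∑ j : Fin M, ‖ψ 0 j‖ ^ 2) :=
  time_splitting_spectral_scheme_conserves_mass_general M hM hMeven a b h Δt hab x hx ω hω ψ ψstar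
    ψhat Υ hψhat hstep1 hstep2
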